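/- Let (K,v) be a henselian valued field and F, G ∈ K[x] monic irreducible polynomials. Then v_F(G)/deg(G) = v_G(F)/deg(F), i.e., v(G(θ))/deg(G) = v(F(ω))/deg(F) for θ a root of F and ω a root of G; both equal the average v(Res(F,G))/(deg(F)·deg(G)) of the values v(θ−ω') over pairs of roots, where Res denotes the resultant. -/

import Mathlib

open Polynomial

section Preamble

variable {Λ : Type*} [AddCommGroup Λ] [LinearOrder Λ] [IsOrderedAddMonoid Λ]

/-- A (Krull) valuation on a commutative ring, written additively, with value `⊤` at `0`. -/
def IsVal {R : Type*} [CommRing R] (μ : R → WithTop Λ) : Prop :=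
  μ 0 = ⊤ ∧ μ 1 = 0 ∧ (∀ a b, μ (a * b) = μ a + μ b) ∧ ∀ a b, min (μ a) (μ b) ≤ μ (a + b)

variable {K : Type*} [Field K]

/-- `μ` is a valuation on `K[x]` whose restriction to `K` is `v`. -/
def ExtendsVal (v : K → WithTop Λ) (μ : Polynomial K → WithTop Λ) : Prop :=
  ∀ a : K, μ (Polynomial.C a) = v a

/-- `a ∼_μ b`: the initial terms of `a` and `b` in the graded algebra of `μ` coincide. -/
def MuEquiv (μ : Polynomial K → WithTop Λ) (a b : Polynomial K) : Prop :=
  (μ a = μ b ∧ μ a < μ (a - b)) ∨ (μ a = ⊤ ∧ μ b = ⊤)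

/-- `h ∣_μ g` : the initial term of `h` divides the initial term of `g` in the
graded algebra `G_μ`. -/
def MuDvd (μ : Polynomial K → WithTop Λ) (h g : Polynomial K) : Prop :=
  ∃ c, MuEquiv μ (h * c) g

/-- `g` is `μ`-minimal: `g ∤_μ f` for all nonzero `f` of degree smaller than `deg g`. -/
def MuMinimal (μ : Polynomial K → WithTop Λ) (g : Polynomial K) : Prop :=
  ∀ f : Polynomial K, f ≠ 0 → f.degree < g.degree → ¬ MuDvd μ g f

/-- `g` is `μ`-irreducible: the principal ideal of `G_μ` generated by the initial term of `g`
is a nonzero prime ideal. -/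
def MuIrreducible (μ : Polynomial K → WithTop Λ) (g : Polynomial K) : Prop :=
  μ g ≠ ⊤ ∧ ¬ MuDvd μ g 1 ∧ ∀ a b : Polynomial K, MuDvd μ g (a * b) → MuDvd μ g a ∨ MuDvd μ g b

/-- A (MacLane–Vaquié) key polynomial for `μ`: monic, `μ`-minimal and `μ`-irreducible. -/
def IsKeyPol (μ : Polynomial K → WithTop Λ) (φ : Polynomial K) : Prop :=
  φ.Monic ∧ MuMinimal μ φ ∧ MuIrreducible μ φ

/-- A key polynomial for `μ` of minimal degree. -/
def MinKeyPol (μ : Polynomial K → WithTop Λ) (φ : Polynomial K) : Prop :=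
  IsKeyPol μ φ ∧ ∀ ψ : Polynomial K, IsKeyPol μ ψ → φ.degree ≤ ψ.degree

/-- The coefficients of the `g`-adic expansion `f = ∑ a_s g^s`, `deg a_s < deg g`. -/
noncomputable def adicCoeff (g : Polynomial K) : Polynomial K → ℕ → Polynomial K
  | f, 0 => f %ₘ g
  | f, (s + 1) => adicCoeff g (f /ₘ g) s

/-- The truncation `μ_g` of `μ` : `μ_g (∑ a_s g^s) = min_s μ (a_s g^s)`. -/
noncomputable def truncVal (μ : Polynomial K → WithTop Λ) (g f : Polynomial K) : WithTop Λ :=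
  (Finset.range (f.natDegree + 1)).inf fun s => μ (adicCoeff g f s * g ^ s)

/-- The augmented valuation `[μ; φ, γ]`, acting on `φ`-expansions by
`ν(∑ a_s φ^s) = min_s (μ(a_s) + s γ)`. -/
noncomputable def augVal (μ : Polynomial K → WithTop Λ) (φ : Polynomial K) (γ : WithTop Λ)
    (f : Polynomial K) : WithTop Λ :=
  (Finset.range (f.natDegree + 1)).inf fun s => μ (adicCoeff φ f s) + s • γ

end Preamble

/-
Over a henselian field the extension `v̄` of `v` to `K̄` is unique, hence invariant under
`Aut(K̄/K)`, so `v̄(G(θ))` does not depend on the choice of the root `θ` of `F`. Summing over all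
roots, `deg F · v̄(G(θ)) = ∑_{θ'} v̄(G(θ')) = ∑_{θ', ω'} v̄(θ' - ω') = v̄(Res(F, G))`, and this
double sum is symmetric in `F` and `G` because `v̄(θ' - ω') = v̄(ω' - θ')`.
-/

namespace IsVal

variable {Λ : Type*} [AddCommGroup Λ] [LinearOrder Λ] {R : Type*} [CommRing R]
  {μ : R → WithTop Λ}

def toAddValuation [IsOrderedAddMonoid Λ] (h : IsVal μ) : AddValuation R (WithTop Λ) :=
  AddValuation.of μ h.1 h.2.1 h.2.2.2 h.2.2.1

theorem map_neg [IsOrderedAddMonoid Λ] (h : IsVal μ) (a : R) : μ (-a) = μ a :=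
  h.toAddValuation.map_neg a

theorem map_multiset_prod (h : IsVal μ) (m : Multiset R) : μ m.prod = (m.map μ).sum := by
  induction m using Multiset.induction with
  | empty => simpa using h.2.1
  | cons a m ih => simp [h.2.2.1, ih]

theorem comp_ringHom {S : Type*} [CommRing S] (h : IsVal μ) (σ : S →+* R) :
    IsVal fun x => μ (σ x) :=
  ⟨by simpa using h.1, by simpa using h.2.1, fun a b => by simpa using h.2.2.1 (σ a) (σ b),
    fun a b => by simpa using h.2.2.2 (σ a) (σ b)⟩

theorem map_algEquiv_of_unique {K L : Type*} [Field K] [Field L] [Algebra K L]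
    {v : K → WithTop Λ} {vbar : L → WithTop Λ} (hvbar : IsVal vbar)
    (hext : ∀ a : K, vbar (algebraMap K L a) = v a)
    (hunique : ∀ w : L → WithTop Λ, IsVal w → (∀ a : K, w (algebraMap K L a) = v a) → w = vbar)
    (σ : L ≃ₐ[K] L) (x : L) : vbar (σ x) = vbar x :=
  congrFun (hunique _ (hvbar.comp_ringHom σ.toRingEquiv.toRingHom)
    fun a => by simpa using hext a) x

end IsVal

section Conjugates

variable {K L M : Type*} [Field K] [Field L] [Algebra K L] [Normal K L] {f : L → M}

theorem apply_aeval_eq_of_irreducible_of_aeval_eq_zero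
    (hinv : ∀ (σ : L ≃ₐ[K] L) (x : L), f (σ x) = f x) {P : K[X]} (hP : Irreducible P)
    {x y : L} (hx : aeval x P = 0) (hy : aeval y P = 0) (Q : K[X]) :
    f (aeval x Q) = f (aeval y Q) := by
  have hmin : minpoly K y = minpoly K x := by
    rw [← minpoly.eq_of_irreducible hP hx, ← minpoly.eq_of_irreducible hP hy]
  obtain ⟨σ, hσ⟩ := (Normal.minpoly_eq_iff_mem_orbit (E := L)).mp hmin
  rw [← hσ, ← hinv σ (aeval x Q)]
  exact congrArg f (aeval_algHom_apply σ x Q).symm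

theorem sum_aroots_apply_aeval_eq_nsmul [AddCommMonoid M]
    (hinv : ∀ (σ : L ≃ₐ[K] L) (x : L), f (σ x) = f x) {P : K[X]} (hP : Irreducible P)
    (hPs : (P.map (algebraMap K L)).Splits) {θ : L} (hθ : aeval θ P = 0) (Q : K[X]) :
    ((P.aroots L).map fun t => f (aeval t Q)).sum = P.natDegree • f (aeval θ Q) := by
  have hcard : Multiset.card (P.aroots L) = P.natDegree := by
    rw [← hPs.natDegree_eq_card_roots, natDegree_map]
  rw [Multiset.map_congr rfl fun t ht =>
    apply_aeval_eq_of_irreducible_of_aeval_eq_zero hinv hP (mem_aroots.mp ht).2 hθ Q]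
  simp [hcard]

end Conjugates

section Resultant

variable {Λ : Type*} [AddCommGroup Λ] [LinearOrder Λ]
  {K L : Type*} [Field K] [Field L] [Algebra K L] {vbar : L → WithTop Λ}

theorem val_aeval_eq_sum_aroots (hvbar : IsVal vbar) {P : K[X]} (hPm : P.Monic)
    (hPs : (P.map (algebraMap K L)).Splits) (x : L) :
    vbar (aeval x P) = ((P.aroots L).map fun t => vbar (x - t)).sum := by
  rw [hPs.aeval_eq_prod_aroots_of_monic hPm, hvbar.map_multiset_prod, Multiset.map_map]
  rfl

theorem sum_aroots_val_aeval_comm [IsOrderedAddMonoid Λ] (hvbar : IsVal vbar) {P Q : K[X]}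
    (hPm : P.Monic) (hQm : Q.Monic) (hPs : (P.map (algebraMap K L)).Splits)
    (hQs : (Q.map (algebraMap K L)).Splits) :
    ((P.aroots L).map fun t => vbar (aeval t Q)).sum =
      ((Q.aroots L).map fun u => vbar (aeval u P)).sum := by
  simp only [val_aeval_eq_sum_aroots hvbar hPm hPs, val_aeval_eq_sum_aroots hvbar hQm hQs]
  rw [Multiset.sum_map_sum_map]
  refine congrArg _ (Multiset.map_congr rfl fun u _ =>
    congrArg _ (Multiset.map_congr rfl fun t _ => ?_))
  rw [← neg_sub, hvbar.map_neg]

end Resultant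

theorem vF_symmetry_general {K : Type*} [Field K] {Λ : Type*} [AddCommGroup Λ] [LinearOrder Λ]
    [IsOrderedAddMonoid Λ]
    (v : K → WithTop Λ)
    (vbar : AlgebraicClosure K → WithTop Λ) (hvbar : IsVal vbar)
    (hextbar : ∀ a : K, vbar (algebraMap K (AlgebraicClosure K) a) = v a)
    (hhens : ∀ w : AlgebraicClosure K → WithTop Λ, IsVal w →
      (∀ a : K, w (algebraMap K (AlgebraicClosure K) a) = v a) → w = vbar)
    (F G : Polynomial K) (hFm : F.Monic) (hFirr : Irreducible F)
    (hGm : G.Monic) (hGirr : Irreducible G)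
    (θ ω : AlgebraicClosure K) (hθ : Polynomial.aeval θ F = 0)
    (hω : Polynomial.aeval ω G = 0) :
    F.natDegree • vbar (Polynomial.aeval θ G) = G.natDegree • vbar (Polynomial.aeval ω F) ∧
    F.natDegree • vbar (Polynomial.aeval θ G) =
      vbar (((F.aroots (AlgebraicClosure K)).map
        (fun t => Polynomial.aeval t G)).prod) := by
  have hinv := hvbar.map_algEquiv_of_unique hextbar hhens
  have hFs := IsAlgClosed.splits (F.map (algebraMap K (AlgebraicClosure K)))
  have hGs := IsAlgClosed.splits (G.map (algebraMap K (AlgebraicClosure K)))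
  rw [← sum_aroots_apply_aeval_eq_nsmul hinv hFirr hFs hθ G]
  refine ⟨?_, ?_⟩
  · rw [sum_aroots_val_aeval_comm hvbar hFm hGm hFs hGs,
      sum_aroots_apply_aeval_eq_nsmul hinv hGirr hGs hω F]
  · rw [hvbar.map_multiset_prod, Multiset.map_map]
    rfl

/-- for monic irreducible `F, G` over a henselian field,
`v_F(G)/deg G = v_G(F)/deg F`, and both equal `v(Res(F,G))/(deg F · deg G)`, where
`Res(F,G) = ∏_{θ_i ∈ Z(F)} G(θ_i)` (stated by cross-multiplication). -/
theorem vF_symmetry {K : Type*} [Field K] {Λ : Type*} [AddCommGroup Λ] [LinearOrder Λ]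
    [IsOrderedAddMonoid Λ]
    (v : K → WithTop Λ) (hv : IsVal v)
    (vbar : AlgebraicClosure K → WithTop Λ) (hvbar : IsVal vbar)
    (hextbar : ∀ a : K, vbar (algebraMap K (AlgebraicClosure K) a) = v a)
    (hhens : ∀ w : AlgebraicClosure K → WithTop Λ, IsVal w →
      (∀ a : K, w (algebraMap K (AlgebraicClosure K) a) = v a) → w = vbar)
    (F G : Polynomial K) (hFm : F.Monic) (hFirr : Irreducible F)
    (hGm : G.Monic) (hGirr : Irreducible G)
    (θ ω : AlgebraicClosure K) (hθ : Polynomial.aeval θ F = 0)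
    (hω : Polynomial.aeval ω G = 0) :
    F.natDegree • vbar (Polynomial.aeval θ G) = G.natDegree • vbar (Polynomial.aeval ω F) ∧
    F.natDegree • vbar (Polynomial.aeval θ G) =
      vbar (((F.aroots (AlgebraicClosure K)).map
        (fun t => Polynomial.aeval t G)).prod) :=
  vF_symmetry_general v vbar hvbar hextbar hhens F G hFm hFirr hGm hGirr θ ω hθ hω
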